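/- For σ > 1/2 there exists C_σ > 0 such that for all v ∈ H^{σ+1}(T) and f ∈ L²(T), ‖[H; v]∂_x f‖_{L²(T)} ≤ C_σ ‖v_x‖_{H^σ(T)} ‖f‖_{L²(T)}, where [H;v]∂_x f := H[v f_x] - v·H[f_x]. -/

import Mathlib

open scoped Real

noncomputable section

/-- The Japanese-bracket power `⟨k⟩ˢ = (1 + |k|²)^{s/2}`. -/
def japow (k : ℤ) (s : ℝ) : ℝ := (1 + (k : ℝ) ^ 2) ^ (s / 2)

/-- The squared `Hˢ(𝕋)` norm of a periodic function described by its sequence of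
Fourier coefficients `c`: `‖f‖²_{Hˢ} = 2π·Σ_k ⟨k⟩^{2s}|f^(k)|²`. -/
def hsNormSq (s : ℝ) (c : ℤ → ℂ) : ℝ := 2 * Real.pi * ∑' k : ℤ, japow k (2 * s) * ‖c k‖ ^ 2

/-- The `Hˢ(𝕋)` norm in terms of Fourier coefficients. -/
def hsNorm (s : ℝ) (c : ℤ → ℂ) : ℝ := Real.sqrt (hsNormSq s c)

/-- Membership in the Sobolev space `Hˢ(𝕋)`, in terms of Fourier coefficients. -/
def MemHs (s : ℝ) (c : ℤ → ℂ) : Prop := Summable fun k : ℤ => japow k (2 * s) * ‖c k‖ ^ 2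

/-- The discrete Hilbert transform on the Fourier side: `(H[f])^(k) = -i·sgn(k)·f^(k)`. -/
def hilbC (c : ℤ → ℂ) : ℤ → ℂ := fun k => -Complex.I * (Int.sign k : ℤ) * c k

/-- The `x`-derivative on the Fourier side: `(∂ₓf)^(k) = i·k·f^(k)`. -/
def derC (c : ℤ → ℂ) : ℤ → ℂ := fun k => Complex.I * (k : ℂ) * c k

/-- The pointwise product of two periodic functions on the Fourier side
(discrete convolution of the coefficients). -/
def convC (a b : ℤ → ℂ) : ℤ → ℂ := fun k => ∑' ℓ : ℤ, a (k - ℓ) * b ℓ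

/-- The commutator `[H; v]f = H[v·f] - v·H[f]` on the Fourier side. -/
def commH (v f : ℤ → ℂ) : ℤ → ℂ := fun k => hilbC (convC v f) k - convC v (hilbC f) k

/-!
On the Fourier side, `[H; v]∂ₓf` has coefficients `∑ₗ -i (sgn k - sgn l) v̂(k - l) · i l f̂(l)`.
The symbol `sgn k - sgn l` vanishes unless `k` and `l` lie on different sides of `0`, and then
`|l| ≤ |k - l|`: the derivative moves from `f` to `v`, and the coefficients are bounded by
`2 (|v̂ₓ| * |f̂|)(k)`. Young's inequality bounds the `ℓ²` norm of this convolution by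
`‖v̂ₓ‖_{ℓ¹} ‖f̂‖_{ℓ²}`, and by Cauchy–Schwarz `‖v̂ₓ‖_{ℓ¹}² ≤ (∑ₖ ⟨k⟩^{-2σ}) ‖vₓ‖²_{H^σ} / 2π`,
where the series converges because `σ > 1/2`. The estimates are carried out in `ℝ≥0∞`, where
series need no summability side conditions.
-/

open scoped ENNReal

namespace ENNReal

variable {ι : Type*}

open MeasureTheory in
theorem tsum_mul_sq_le (x y : ι → ℝ≥0∞) :
    (∑' i, x i * y i) ^ 2 ≤ (∑' i, x i ^ 2) * ∑' i, y i ^ 2 := by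
  let _ : MeasurableSpace ι := ⊤
  have : MeasurableSingletonClass ι := ⟨fun _ => trivial⟩
  have h := lintegral_mul_le_Lp_mul_Lq Measure.count Real.HolderConjugate.two_two
    measurable_from_top.aemeasurable measurable_from_top.aemeasurable (f := x) (g := y)
  simp only [lintegral_count, Pi.mul_apply, ENNReal.rpow_two] at h
  calc _ ≤ ((∑' i, x i ^ 2) ^ (1 / 2 : ℝ) * (∑' i, y i ^ 2) ^ (1 / 2 : ℝ)) ^ 2 := by gcongr
    _ = _ := by
      rw [mul_pow, ← ENNReal.rpow_natCast, ← ENNReal.rpow_natCast (_ ^ _), ← ENNReal.rpow_mul,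
        ← ENNReal.rpow_mul]
      norm_num

theorem tsum_sq_le_tsum_mul_tsum_of_sq_le_mul {r f g : ι → ℝ≥0∞} (h : ∀ i, r i ^ 2 ≤ f i * g i) :
    (∑' i, r i) ^ 2 ≤ (∑' i, f i) * ∑' i, g i := by
  have hsqrt (a : ℝ≥0∞) : (a ^ (1 / 2 : ℝ)) ^ 2 = a := by
    rw [← ENNReal.rpow_natCast, ← ENNReal.rpow_mul]; norm_num
  have hr (i : ι) : r i ≤ f i ^ (1 / 2 : ℝ) * g i ^ (1 / 2 : ℝ) := by
    rw [← ENNReal.pow_le_pow_left_iff two_ne_zero, mul_pow, hsqrt, hsqrt]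
    exact h i
  calc _ ≤ (∑' i, f i ^ (1 / 2 : ℝ) * g i ^ (1 / 2 : ℝ)) ^ 2 := by grw [ENNReal.tsum_le_tsum hr]
    _ ≤ _ := by
      simpa only [hsqrt] using tsum_mul_sq_le (f · ^ (1 / 2 : ℝ)) (g · ^ (1 / 2 : ℝ))

theorem tsum_conv_sq_le {G : Type*} [AddGroup G] (a b : G → ℝ≥0∞) :
    ∑' k, (∑' l, a (k - l) * b l) ^ 2 ≤ (∑' k, a k) ^ 2 * ∑' k, b k ^ 2 := by
  have hshift (k : G) : ∑' l, a (k - l) = ∑' k, a k := (Equiv.subLeft k).tsum_eq a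
  have hshift' (l : G) : ∑' k, a (k - l) = ∑' k, a k := (Equiv.subRight l).tsum_eq a
  calc ∑' k, (∑' l, a (k - l) * b l) ^ 2
      ≤ ∑' k, (∑' l, a (k - l)) * ∑' l, a (k - l) * b l ^ 2 :=
        ENNReal.tsum_le_tsum fun k => tsum_sq_le_tsum_mul_tsum_of_sq_le_mul fun l => by
          rw [mul_pow, sq (a _), mul_assoc]
    _ = (∑' k, a k) * ∑' l, b l ^ 2 * ∑' k, a (k - l) := by
        simp_rw [hshift, ENNReal.tsum_mul_left, mul_comm _ (b _ ^ 2)]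
        rw [ENNReal.tsum_comm]
        simp_rw [ENNReal.tsum_mul_left]
    _ = (∑' k, a k) ^ 2 * ∑' k, b k ^ 2 := by
        simp_rw [hshift', ENNReal.tsum_mul_right]
        ring

end ENNReal

lemma japow_pos (k : ℤ) (s : ℝ) : 0 < japow k s := by unfold japow; positivity

lemma japow_zero (k : ℤ) : japow k 0 = 1 := by simp [japow]

lemma japow_mul_japow (k : ℤ) (a b : ℝ) : japow k a * japow k b = japow k (a + b) := by
  rw [japow, japow, japow, ← Real.rpow_add (by positivity), add_div]

lemma japow_sq (k : ℤ) (s : ℝ) : japow k s ^ 2 = japow k (2 * s) := by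
  rw [japow, japow, ← Real.rpow_mul_natCast (by positivity)]
  ring_nf

lemma japow_mono (k : ℤ) {a b : ℝ} (hab : a ≤ b) : japow k a ≤ japow k b :=
  Real.rpow_le_rpow_of_exponent_le (by nlinarith) (by linarith)

lemma one_le_japow (k : ℤ) {s : ℝ} (hs : 0 ≤ s) : 1 ≤ japow k s :=
  japow_zero k ▸ japow_mono k hs

lemma japow_two (k : ℤ) : japow k 2 = 1 + (k : ℝ) ^ 2 := by simp [japow]

lemma abs_le_japow_one (k : ℤ) : |(k : ℝ)| ≤ japow k 1 := by
  rw [← sq_le_sq₀ (abs_nonneg _) (japow_pos k 1).le, japow_sq, sq_abs, mul_one, japow_two]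
  linarith

lemma abs_le_one_add_abs_mul_japow (k l : ℤ) : |(l : ℝ)| ≤ (1 + |(k : ℝ)|) * japow (k - l) 1 := by
  have h1 := abs_le_japow_one (k - l)
  have h2 := one_le_japow (k - l) zero_le_one
  have h3 : |(l : ℝ)| ≤ |((k - l : ℤ) : ℝ)| + |(k : ℝ)| := by
    rw [Int.cast_sub, abs_sub_comm]
    simpa using abs_add_le ((l : ℝ) - k) k
  nlinarith [abs_nonneg (k : ℝ)]

lemma summable_japow_neg {s : ℝ} (hs : 1 < s) : Summable fun k : ℤ => japow k (-s) := by
  refine Summable.of_norm_bounded_eventually (Real.summable_abs_int_rpow hs) ?_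
  filter_upwards [(Set.finite_singleton (0 : ℤ)).compl_mem_cofinite] with k hk
  have hk : (0 : ℝ) < |(k : ℝ)| := by simpa using hk
  calc ‖japow k (-s)‖ = (1 + |(k : ℝ)| ^ 2) ^ (-s / 2) := by
        rw [Real.norm_of_nonneg (japow_pos k _).le, japow, sq_abs]
    _ ≤ (|(k : ℝ)| ^ (2 : ℝ)) ^ (-s / 2) := by
        rw [Real.rpow_two]
        exact Real.rpow_le_rpow_of_nonpos (by positivity) (by linarith) (by linarith)
    _ = |(k : ℝ)| ^ (-s) := by
        rw [← Real.rpow_mul hk.le]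
        ring_nf

/-- `hsNormSq s c / 2π`, computed in `ℝ≥0∞` so that it is `⊤`, not a junk `0`, off `Hˢ`. -/
def hsEnergy (s : ℝ) (c : ℤ → ℂ) : ℝ≥0∞ := ∑' k, ENNReal.ofReal (japow k (2 * s) * ‖c k‖ ^ 2)

lemma hsEnergy_zero (c : ℤ → ℂ) : hsEnergy 0 c = ∑' k, ‖c k‖ₑ ^ 2 := by
  simp [hsEnergy, japow_zero, ENNReal.ofReal_pow, ofReal_norm]

lemma hsNormSq_eq_toReal_hsEnergy (s : ℝ) (c : ℤ → ℂ) :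
    hsNormSq s c = 2 * Real.pi * (hsEnergy s c).toReal := by
  rw [hsNormSq, hsEnergy, ENNReal.tsum_toReal_eq fun k => ENNReal.ofReal_ne_top]
  simp_rw [ENNReal.toReal_ofReal (mul_nonneg (japow_pos _ _).le (sq_nonneg _))]

lemma MemHs.hsEnergy_ne_top {s : ℝ} {c : ℤ → ℂ} (hc : MemHs s c) : hsEnergy s c ≠ ⊤ := by
  rw [hsEnergy, ← ENNReal.ofReal_tsum_of_nonneg
    (fun k => mul_nonneg (japow_pos _ _).le (sq_nonneg _)) hc]
  exact ENNReal.ofReal_ne_top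

lemma hsEnergy_mono (c : ℤ → ℂ) {s t : ℝ} (hst : s ≤ t) : hsEnergy s c ≤ hsEnergy t c := by
  unfold hsEnergy
  gcongr with k
  exact japow_mono k (by linarith)

lemma hsEnergy_derC_le (s : ℝ) (c : ℤ → ℂ) : hsEnergy s (derC c) ≤ hsEnergy (s + 1) c := by
  refine ENNReal.tsum_le_tsum fun k => ENNReal.ofReal_le_ofReal ?_
  calc japow k (2 * s) * ‖derC c k‖ ^ 2 = japow k (2 * s) * (k : ℝ) ^ 2 * ‖c k‖ ^ 2 := by
        simp only [derC, Complex.norm_mul, Complex.norm_I, Complex.norm_intCast, one_mul, mul_pow,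
          sq_abs]
        ring
    _ ≤ japow k (2 * s) * japow k 2 * ‖c k‖ ^ 2 := by
        gcongr
        · exact (japow_pos k _).le
        · rw [japow_two]; linarith
    _ = japow k (2 * (s + 1)) * ‖c k‖ ^ 2 := by rw [japow_mul_japow]; ring_nf

lemma sq_tsum_enorm_le_mul_hsEnergy (s : ℝ) (c : ℤ → ℂ) :
    (∑' k, ‖c k‖ₑ) ^ 2 ≤ (∑' k, ENNReal.ofReal (japow k (-(2 * s)))) * hsEnergy s c :=
  ENNReal.tsum_sq_le_tsum_mul_tsum_of_sq_le_mul fun k => by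
    rw [← ENNReal.ofReal_mul (japow_pos _ _).le, ← mul_assoc, japow_mul_japow, neg_add_cancel,
      japow_zero, one_mul, ENNReal.ofReal_pow (norm_nonneg _), ofReal_norm]

lemma hsNorm_le_of_hsEnergy_le {s t u K : ℝ} {c d e : ℤ → ℂ} (hK : 0 ≤ K)
    (hd : hsEnergy t d ≠ ⊤) (he : hsEnergy u e ≠ ⊤)
    (h : hsEnergy s c ≤ ENNReal.ofReal (K ^ 2) * hsEnergy t d * hsEnergy u e) :
    hsNorm s c ≤ K * hsNorm t d * hsNorm u e := by
  have hreal := ENNReal.toReal_mono (by finiteness) h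
  rw [ENNReal.toReal_mul, ENNReal.toReal_mul, ENNReal.toReal_ofReal (sq_nonneg K)] at hreal
  simp only [hsNorm, hsNormSq_eq_toReal_hsEnergy]
  rw [← Real.sqrt_sq hK, ← Real.sqrt_mul (sq_nonneg K), ← Real.sqrt_mul (by positivity)]
  refine Real.sqrt_le_sqrt ?_
  have hπ : 1 ≤ 2 * Real.pi := by linarith [Real.pi_gt_three]
  calc 2 * Real.pi * (hsEnergy s c).toReal
      ≤ 2 * Real.pi * (K ^ 2 * (hsEnergy t d).toReal * (hsEnergy u e).toReal) := by gcongr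
    _ ≤ 2 * Real.pi * (K ^ 2 * (hsEnergy t d).toReal * (hsEnergy u e).toReal) * (2 * Real.pi) :=
        le_mul_of_one_le_right (by positivity) hπ
    _ = K ^ 2 * (2 * Real.pi * (hsEnergy t d).toReal) * (2 * Real.pi * (hsEnergy u e).toReal) := by
        ring

lemma abs_sign_sub_sign_mul_abs_le (k l : ℤ) : |k.sign - l.sign| * |l| ≤ 2 * |k - l| := by
  rcases lt_trichotomy k 0 with hk | hk | hk <;> rcases lt_trichotomy l 0 with hl | hl | hl <;>
    simp [Int.sign_eq_neg_one_of_neg, Int.sign_eq_one_of_pos, abs_of_neg, abs_of_pos, *] <;>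
    rcases abs_cases (k - l) with h | h <;> omega

lemma norm_hilbC_le (g : ℤ → ℂ) (l : ℤ) : ‖hilbC g l‖ ≤ ‖g l‖ := by
  rw [hilbC, norm_mul, norm_mul, norm_neg, Complex.norm_I, one_mul, Complex.norm_intCast]
  refine mul_le_of_le_one_left (norm_nonneg _) ?_
  rcases Int.sign_trichotomy l with h | h | h <;> simp [h]

lemma commH_eq_tsum (v g : ℤ → ℂ) (k : ℤ) (hsum : Summable fun l => ‖v (k - l) * g l‖) :
    commH v g k = ∑' l, -Complex.I * ((k.sign - l.sign : ℤ) : ℂ) * (v (k - l) * g l) := by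
  have hsum' : Summable fun l => v (k - l) * hilbC g l :=
    Summable.of_norm_bounded hsum fun l => by
      rw [norm_mul, norm_mul]; gcongr; exact norm_hilbC_le g l
  rw [commH, hilbC, convC, convC, ← tsum_mul_left, ← hsum.of_norm.mul_left _ |>.tsum_sub hsum']
  refine tsum_congr fun l => ?_
  simp only [hilbC]
  push_cast
  ring

lemma enorm_commH_derC_le (v f : ℤ → ℂ) (k : ℤ)
    (hsum : Summable fun l => ‖v (k - l) * derC f l‖) :
    ‖commH v (derC f) k‖ₑ ≤ 2 * ∑' l, ‖derC v (k - l)‖ₑ * ‖f l‖ₑ := by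
  rw [commH_eq_tsum v _ k hsum, ← ENNReal.tsum_mul_left]
  refine enorm_tsum_le_tsum_enorm.trans (ENNReal.tsum_le_tsum fun l => ?_)
  have hreal : ‖-Complex.I * ((k.sign - l.sign : ℤ) : ℂ) * (v (k - l) * derC f l)‖
      ≤ 2 * (‖derC v (k - l)‖ * ‖f l‖) := by
    have h : |(k.sign : ℝ) - l.sign| * |(l : ℝ)| ≤ 2 * |(k : ℝ) - l| := by
      exact_mod_cast abs_sign_sub_sign_mul_abs_le k l
    simp only [derC, norm_mul, norm_neg, Complex.norm_I, Complex.norm_intCast, one_mul]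
    push_cast
    calc _ = |(k.sign : ℝ) - l.sign| * |(l : ℝ)| * (‖v (k - l)‖ * ‖f l‖) := by ring
      _ ≤ 2 * |(k : ℝ) - l| * (‖v (k - l)‖ * ‖f l‖) := by gcongr
      _ = _ := by ring
  calc _ = ENNReal.ofReal ‖-Complex.I * ((k.sign - l.sign : ℤ) : ℂ) * (v (k - l) * derC f l)‖ :=
        (ofReal_norm _).symm
    _ ≤ ENNReal.ofReal (2 * (‖derC v (k - l)‖ * ‖f l‖)) := ENNReal.ofReal_le_ofReal hreal
    _ = 2 * (‖derC v (k - l)‖ₑ * ‖f l‖ₑ) := by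
        rw [ENNReal.ofReal_mul zero_le_two, ENNReal.ofReal_mul (norm_nonneg _), ofReal_norm,
          ofReal_norm, ENNReal.ofReal_ofNat]

lemma summable_norm_mul_derC {v f : ℤ → ℂ} (hv : hsEnergy 1 v ≠ ⊤) (hf : hsEnergy 0 f ≠ ⊤)
    (k : ℤ) : Summable fun l => ‖v (k - l) * derC f l‖ := by
  set x : ℤ → ℝ≥0∞ := fun j => ENNReal.ofReal (japow j 1 * ‖v j‖)
  have hpt (l : ℤ) :
      ‖v (k - l) * derC f l‖ₑ ≤ ENNReal.ofReal (1 + |(k : ℝ)|) * (x (k - l) * ‖f l‖ₑ) := by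
    have hl := abs_le_one_add_abs_mul_japow k l
    have hreal : ‖v (k - l) * derC f l‖
        ≤ (1 + |(k : ℝ)|) * (japow (k - l) 1 * ‖v (k - l)‖ * ‖f l‖) := by
      simp only [derC, norm_mul, Complex.norm_I, Complex.norm_intCast, one_mul]
      calc _ = |(l : ℝ)| * (‖v (k - l)‖ * ‖f l‖) := by ring
        _ ≤ (1 + |(k : ℝ)|) * japow (k - l) 1 * (‖v (k - l)‖ * ‖f l‖) := by gcongr
        _ = _ := by ring
    calc _ = ENNReal.ofReal ‖v (k - l) * derC f l‖ := (ofReal_norm _).symm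
      _ ≤ _ := ENNReal.ofReal_le_ofReal hreal
      _ = _ := by
        rw [ENNReal.ofReal_mul (by positivity),
          ENNReal.ofReal_mul (mul_nonneg (japow_pos _ _).le (norm_nonneg _)), ofReal_norm]
  have hshift : ∑' l, x (k - l) ^ 2 = ∑' j, x j ^ 2 := (Equiv.subLeft k).tsum_eq (x · ^ 2)
  have hcs : (∑' l, x (k - l) * ‖f l‖ₑ) ^ 2 ≤ hsEnergy 1 v * hsEnergy 0 f := by
    refine (ENNReal.tsum_mul_sq_le _ _).trans_eq ?_
    rw [hsEnergy_zero, hshift, hsEnergy]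
    congr 1
    refine tsum_congr fun j => ?_
    rw [← ENNReal.ofReal_pow (mul_nonneg (japow_pos _ _).le (norm_nonneg _)), mul_pow, japow_sq]
  rw [← tsum_enorm_ne_top_iff_summable_norm]
  refine ne_top_of_le_ne_top ?_ (ENNReal.tsum_le_tsum hpt)
  rw [ENNReal.tsum_mul_left]
  refine ENNReal.mul_ne_top ENNReal.ofReal_ne_top ?_
  exact (ENNReal.pow_ne_top_iff.1 (ne_top_of_le_ne_top (ENNReal.mul_ne_top hv hf) hcs)).resolve_right
    two_ne_zero

lemma hsEnergy_commH_derC_le {v f : ℤ → ℂ} (hv : hsEnergy 1 v ≠ ⊤) (hf : hsEnergy 0 f ≠ ⊤) :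
    hsEnergy 0 (commH v (derC f)) ≤ 4 * (∑' k, ‖derC v k‖ₑ) ^ 2 * hsEnergy 0 f := by
  rw [hsEnergy_zero, hsEnergy_zero, mul_assoc]
  calc ∑' k, ‖commH v (derC f) k‖ₑ ^ 2
      ≤ ∑' k, (2 * ∑' l, ‖derC v (k - l)‖ₑ * ‖f l‖ₑ) ^ 2 :=
        ENNReal.tsum_le_tsum fun k => by
          gcongr
          exact enorm_commH_derC_le v f k (summable_norm_mul_derC hv hf k)
    _ = 4 * ∑' k, (∑' l, ‖derC v (k - l)‖ₑ * ‖f l‖ₑ) ^ 2 := by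
        simp_rw [mul_pow, ENNReal.tsum_mul_left]
        norm_num
    _ ≤ 4 * ((∑' k, ‖derC v k‖ₑ) ^ 2 * ∑' k, ‖f k‖ₑ ^ 2) := by
        gcongr
        exact ENNReal.tsum_conv_sq_le _ _

/-- For `σ > 1/2` there is `C > 0` such that for all `v ∈ H^(σ+1)` and
`f ∈ L²`, `‖[H; v]∂ₓf‖_{L²} ≤ C * ‖vₓ‖_{H^σ} * ‖f‖_{L²}`. -/
theorem stmt_9 (σ : ℝ) (hσ : 1 / 2 < σ) :
    ∃ C > (0 : ℝ), ∀ v f : ℤ → ℂ, MemHs (σ + 1) v → MemHs 0 f →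
      hsNorm 0 (commH v (derC f)) ≤ C * hsNorm σ (derC v) * hsNorm 0 f := by
  have hS : Summable fun k : ℤ => japow k (-(2 * σ)) := summable_japow_neg (by linarith)
  set S := ∑' k : ℤ, japow k (-(2 * σ))
  have hS0 : 0 < S := hS.tsum_pos (fun k => (japow_pos k _).le) 0 (japow_pos 0 _)
  refine ⟨2 * √S, by positivity, fun v f hv hf => ?_⟩
  have hv1 : hsEnergy 1 v ≠ ⊤ :=
    ne_top_of_le_ne_top hv.hsEnergy_ne_top (hsEnergy_mono v (by linarith))
  have hdv : hsEnergy σ (derC v) ≠ ⊤ :=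
    ne_top_of_le_ne_top hv.hsEnergy_ne_top (hsEnergy_derC_le σ v)
  refine hsNorm_le_of_hsEnergy_le (by positivity) hdv hf.hsEnergy_ne_top ?_
  calc hsEnergy 0 (commH v (derC f))
      ≤ 4 * (∑' k, ‖derC v k‖ₑ) ^ 2 * hsEnergy 0 f :=
        hsEnergy_commH_derC_le hv1 hf.hsEnergy_ne_top
    _ ≤ 4 * (ENNReal.ofReal S * hsEnergy σ (derC v)) * hsEnergy 0 f := by
        rw [ENNReal.ofReal_tsum_of_nonneg (fun k => (japow_pos k _).le) hS]
        gcongr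
        exact sq_tsum_enorm_le_mul_hsEnergy σ (derC v)
    _ = ENNReal.ofReal ((2 * √S) ^ 2) * hsEnergy σ (derC v) * hsEnergy 0 f := by
        rw [mul_pow, Real.sq_sqrt hS0.le, ENNReal.ofReal_mul (by norm_num)]
        norm_num
        ring
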